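/- arXiv:2208.02776 — 2 statements merged into one kernel-verified Lean document; each statement's English description precedes it below -/
import Mathlib

section
/- Let M = [[A, B],[Bᵀ, 0]] be a symmetric saddle-point matrix over ℝ with A symmetric positive definite and B of full row rank, and let P = [[A, 0],[0, BA⁻¹Bᵀ]] be the block diagonal preconditioner. Then the preconditioned matrix P⁻¹M satisfies the polynomial identity (T − I)(T² − T − I) = 0, where T = P⁻¹M; in particular T has at most three distinct eigenvalues: 1, (1+√5)/2, and (1−√5)/2. -/
/-!
Full row rank of `B` makes `S = B A⁻¹ Bᵀ` positive definite, so the preconditioned matrix is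
`T = [[I, X], [Y, 0]]` with `X = A⁻¹ Bᵀ`, `Y = S⁻¹ B` and `Y X = I`. Then
`T² - T - I = [[X Y - I, 0], [0, 0]]`, and multiplying by `T - I = [[0, X], [Y, -I]]` leaves only
`Y (X Y - I) = 0`. An eigenvalue of `T` is therefore a root of `(t - 1)(t² - t - 1)`, whose roots
are `1`, the golden ratio and its conjugate.
-/

open Matrix Polynomial
open scoped ComplexOrder

namespace Matrix

theorem vecMul_injective_of_rank_eq_card {K m n : Type*} [Field K] [Fintype m] [Fintype n]
    {B : Matrix m n K} (hB : B.rank = Fintype.card m) : Function.Injective B.vecMul := by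
  rw [vecMul_injective_iff, linearIndependent_iff_card_eq_finrank_span, ← hB,
    rank_eq_finrank_span_row, Set.finrank]

theorem PosDef.mul_mul_conjTranspose_of_rank_eq_card {𝕜 m n : Type*} [RCLike 𝕜] [Fintype m]
    [Fintype n] {A : Matrix n n 𝕜} (hA : A.PosDef) {B : Matrix m n 𝕜}
    (hB : B.rank = Fintype.card m) : (B * A * Bᴴ).PosDef :=
  hA.mul_mul_conjTranspose_same (vecMul_injective_of_rank_eq_card hB)

theorem isRoot_of_aeval_eq_zero_of_mulVec_eq_smul {ι K : Type*} [Fintype ι] [DecidableEq ι]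
    [Field K] {T : Matrix ι ι K} {p : K[X]} (hp : aeval T p = 0) {μ : K} {x : ι → K}
    (hx : x ≠ 0) (hTx : T *ᵥ x = μ • x) : p.IsRoot μ := by
  have hev : Module.End.HasEigenvector (toLinAlgEquiv' T) μ x :=
    ⟨Module.End.mem_eigenspace_iff.mpr (by rwa [toLinAlgEquiv'_apply]), hx⟩
  have h := Module.End.aeval_apply_of_hasEigenvector (p := p) hev
  rw [aeval_algEquiv, AlgHom.comp_apply, hp, map_zero, LinearMap.zero_apply, eq_comm,
    smul_eq_zero] at h
  exact h.resolve_right hx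

variable {l m R : Type*} [Fintype l] [Fintype m] [DecidableEq l] [DecidableEq m]

theorem inv_fromBlocks_zero_zero_mul_fromBlocks [CommRing R] {A : Matrix l l R}
    {D : Matrix m m R} (hA : IsUnit A) (hD : IsUnit D) (B : Matrix l m R) (C : Matrix m l R) :
    (fromBlocks A 0 0 D)⁻¹ * fromBlocks A B C 0 = fromBlocks 1 (A⁻¹ * B) (D⁻¹ * C) 0 := by
  rw [inv_fromBlocks_zero₂₁_of_isUnit_iff _ _ _ (iff_of_true hA hD)]
  simp [fromBlocks_multiply, nonsing_inv_mul _ ((isUnit_iff_isUnit_det A).mp hA)]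

theorem sub_one_mul_sq_sub_sub_one_eq_zero_of_mul_eq_one [Ring R] {X : Matrix l m R}
    {Y : Matrix m l R} (hYX : Y * X = 1) {T : Matrix (l ⊕ m) (l ⊕ m) R}
    (hT : T = fromBlocks 1 X Y 0) : (T - 1) * (T ^ 2 - T - 1) = 0 := by
  have hsub : T - 1 = fromBlocks 0 X Y (-1) := by
    simp [hT, ← fromBlocks_one, sub_eq_add_neg, fromBlocks_neg, fromBlocks_add]
  have hquad : T ^ 2 - T - 1 = fromBlocks (X * Y - 1) 0 0 0 := by
    simp [hT, sq, fromBlocks_multiply, hYX, ← fromBlocks_one, sub_eq_add_neg, fromBlocks_neg,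
      fromBlocks_add]
  have hY : Y * (X * Y - 1) = 0 := by
    rw [Matrix.mul_sub, ← Matrix.mul_assoc, hYX, Matrix.one_mul, Matrix.mul_one, sub_self]
  simp [hsub, hquad, fromBlocks_multiply, hY]

end Matrix

theorem Real.sub_goldenRatio_mul_sub_goldenConj (x : ℝ) :
    (x - goldenRatio) * (x - goldenConj) = x ^ 2 - x - 1 := by
  linear_combination (-x) * goldenRatio_add_goldenConj + goldenRatio_mul_goldenConj

theorem MGW_saddle_point_spectrum {n m : Type*}
    [Fintype n] [Fintype m] [DecidableEq n] [DecidableEq m]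
    (A : Matrix n n ℝ) (B : Matrix m n ℝ)
    (hA : A.PosDef) (hB : B.rank = Fintype.card m)
    (M P T : Matrix (n ⊕ m) (n ⊕ m) ℝ)
    (hM : M = fromBlocks A Bᵀ B 0)
    (hP : P = fromBlocks A 0 0 (B * A⁻¹ * Bᵀ))
    (hT : T = P⁻¹ * M) :
    (T - 1) * (T ^ 2 - T - 1) = 0 ∧
      ∀ (lam : ℝ) (x : (n ⊕ m) → ℝ), x ≠ 0 → T.mulVec x = lam • x →
        lam = 1 ∨ lam = (1 + Real.sqrt 5) / 2 ∨ lam = (1 - Real.sqrt 5) / 2 := by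
  set S := B * A⁻¹ * Bᵀ
  have hS : S.PosDef := by
    simpa [conjTranspose_eq_transpose_of_trivial] using
      hA.inv.mul_mul_conjTranspose_of_rank_eq_card hB
  have hT' : T = fromBlocks 1 (A⁻¹ * Bᵀ) (S⁻¹ * B) 0 := by
    rw [hT, hP, hM, inv_fromBlocks_zero_zero_mul_fromBlocks hA.isUnit hS.isUnit]
  have hYX : S⁻¹ * B * (A⁻¹ * Bᵀ) = 1 := by
    rw [Matrix.mul_assoc, ← Matrix.mul_assoc B]
    exact nonsing_inv_mul S ((isUnit_iff_isUnit_det S).mp hS.isUnit)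
  have hcubic := sub_one_mul_sq_sub_sub_one_eq_zero_of_mul_eq_one hYX hT'
  refine ⟨hcubic, fun lam x hx hTx => ?_⟩
  have hroot : ((X - 1) * (X ^ 2 - X - 1) : ℝ[X]).IsRoot lam :=
    isRoot_of_aeval_eq_zero_of_mulVec_eq_smul (by simpa using hcubic) hx hTx
  simpa only [IsRoot, eval_mul, eval_sub, eval_pow, eval_X, eval_one,
    ← Real.sub_goldenRatio_mul_sub_goldenConj, mul_eq_zero, sub_eq_zero] using hroot
end

section
/- Let ε, σ, μ, τ > 0 and let the energy at time step m be defined as Eₘ = (ε/2)‖Eₕᵐ‖² + (1/(2μ))‖Bₕᵐ‖² for solutions of the implicit Euler scheme (1/τ)⟨μ⁻¹(Bᵐ−Bᵐ⁻¹), w⟩ + ⟨K Eᵐ, μ⁻¹w⟩ = 0 and (ε/τ)⟨Eᵐ−Eᵐ⁻¹, v⟩ + σ⟨Eᵐ, v⟩ − ⟨μ⁻¹Bᵐ, K v⟩ = 0 (with zero source). Then Eₘ ≤ Eₘ₋₁, i.e., the discrete energy is non-increasing. -/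
open scoped RealInnerProductSpace

theorem implicit_euler_energy_decay {V W : Type*}
    [NormedAddCommGroup V] [InnerProductSpace ℝ V] [FiniteDimensional ℝ V]
    [NormedAddCommGroup W] [InnerProductSpace ℝ W] [FiniteDimensional ℝ W]
    (K : V →ₗ[ℝ] W) (ε σ μ τ : ℝ) (hε : 0 < ε) (hσ : 0 < σ) (hμ : 0 < μ)
    (hτ : 0 < τ)
    (E Eprev : V) (B Bprev : W)
    (heq1 : ∀ w : W, (1 / τ) * ⟪μ⁻¹ • (B - Bprev), w⟫ + ⟪K E, μ⁻¹ • w⟫ = 0)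
    (heq2 : ∀ v : V,
      (ε / τ) * ⟪E - Eprev, v⟫ + σ * ⟪E, v⟫ - ⟪μ⁻¹ • B, K v⟫ = 0) :
    (ε / 2) * ‖E‖ ^ 2 + (1 / (2 * μ)) * ‖B‖ ^ 2 ≤
      (ε / 2) * ‖Eprev‖ ^ 2 + (1 / (2 * μ)) * ‖Bprev‖ ^ 2 := by
  have h1 := heq1 B
  have h2 := heq2 E
  rw [real_inner_smul_left, real_inner_smul_right] at h1
  rw [real_inner_smul_left, real_inner_self_eq_norm_sq, real_inner_comm (K E) B] at h2
  have key : (ε / τ) * ⟪E - Eprev, E⟫ + (μ⁻¹ / τ) * ⟪B - Bprev, B⟫ + σ * ‖E‖ ^ 2 = 0 := by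
    linear_combination h1 + h2
  have hE : ‖E‖ ^ 2 - ‖Eprev‖ ^ 2 ≤ 2 * ⟪E - Eprev, E⟫ := by
    rw [inner_sub_left, real_inner_self_eq_norm_sq]
    nlinarith [real_inner_le_norm Eprev E, sq_nonneg (‖E‖ - ‖Eprev‖)]
  have hB : ‖B‖ ^ 2 - ‖Bprev‖ ^ 2 ≤ 2 * ⟪B - Bprev, B⟫ := by
    rw [inner_sub_left, real_inner_self_eq_norm_sq]
    nlinarith [real_inner_le_norm Bprev B, sq_nonneg (‖B‖ - ‖Bprev‖)]
  have hμ' : 0 < μ⁻¹ := inv_pos.mpr hμ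
  have hτ' : 0 < τ⁻¹ := inv_pos.mpr hτ
  have hσE : 0 ≤ σ * ‖E‖ ^ 2 := by positivity
  have h3 : ε * (‖E‖ ^ 2 - ‖Eprev‖ ^ 2) + μ⁻¹ * (‖B‖ ^ 2 - ‖Bprev‖ ^ 2) ≤ 0 := by
    have hkey : ε * ⟪E - Eprev, E⟫ + μ⁻¹ * ⟪B - Bprev, B⟫ ≤ 0 := by
      have := mul_le_mul_of_nonneg_left (le_of_eq key) (le_of_lt hτ)
      have h0 : τ * ((ε / τ) * ⟪E - Eprev, E⟫ + (μ⁻¹ / τ) * ⟪B - Bprev, B⟫ + σ * ‖E‖ ^ 2)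
          = ε * ⟪E - Eprev, E⟫ + μ⁻¹ * ⟪B - Bprev, B⟫ + τ * (σ * ‖E‖ ^ 2) := by
        field_simp
      nlinarith [mul_nonneg hτ.le hσE]
    nlinarith [mul_le_mul_of_nonneg_left hE hε.le, mul_le_mul_of_nonneg_left hB hμ'.le]
  have hinv : 1 / (2 * μ) = μ⁻¹ / 2 := by field_simp
  rw [hinv]
  linarith
end
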